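/- arXiv:2403.03317 — 6 statements merged into one kernel-verified Lean document; each statement's English description precedes it below -/
import Mathlib

section
/- (Proposition 1) A strategy profile (λ̂, x̂, σ̂) in the CMGPTA with deviator-reporting mechanisms is a truthful Λ-equilibrium if and only if (x̂, σ̂) satisfies the agents' action-optimality and message-optimality conditions together with truthful reporting, and for every principal m and every profile of transfer schedules t^m ∈ T^m, V^m(λ̂, x̂, σ̂) ≥ V^m((t^m, λ̂^{-m}), x̂, σ̂). That is, to verify a truthful Λ-equilibrium it is necessary and sufficient to check each principal's unilateral deviations to profiles of single transfer schedules rather than to arbitrary DRMs. -/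
open scoped Classical
open Finset

noncomputable section

namespace CMGPTA

/-- A profile of transfer schedules of one principal: a nonnegative payment
schedule for each agent. -/
def Sched (N : Type*) (S : N → Type*) : Type _ := ∀ n : N, S n → NNReal

/-- A deviator-reporting mechanism (DRM) of a principal: no-deviation schedules
together with punishment schedules, one for each potentially deviating principal. -/
def DRM (M N : Type*) (S : N → Type*) : Type _ := Sched N S × (M → Sched N S)

/-- Agents' communication strategies: a report in `M̄ = M ∪ {0}` (encoded as
`Option M`, with `none` standing for `0`) to each principal, given any profile of DRMs. -/
abbrev CommStrat (M N : Type*) (S : N → Type*) : Type _ :=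
  ∀ _ : N, (M → DRM M N S) → M → Option M

/-- Agents' action strategies: an action given the profile of DRMs, the agent's own
reports, and the assigned transfer schedules. -/
abbrev ActStrat (M N : Type*) (S : N → Type*) : Type _ :=
  ∀ n : N, (M → DRM M N S) → (M → Option M) → (M → Sched N S) → S n

variable {M N : Type*} [Fintype M] [Fintype N] [DecidableEq M] [DecidableEq N]
variable {S : N → Type*} [∀ n, Fintype (S n)] [∀ n, Nonempty (S n)]

/-- Number of agents sending report `v`. -/
def cnt (k : N → Option M) (v : Option M) : ℕ :=
  (Finset.univ.filter fun n => k n = v).card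

/-- The transfer schedules assigned by principal `m`'s DRM given the agents' reports:
the punishment schedules against `j` if some `j ≠ m` is reported by strictly more than
`N/2` agents, the zero schedules if two distinct reports `≠ m` are each sent by exactly
`N/2` agents, and the no-deviation schedules otherwise. -/
def drmOut (m : M) (d : DRM M N S) (k : N → Option M) : Sched N S :=
  if h : ∃ j : M, j ≠ m ∧ Fintype.card N < 2 * cnt k (some j) then d.2 h.choose
  else if ∃ v v' : Option M, v ≠ v' ∧ v ≠ some m ∧ v' ≠ some m ∧
      2 * cnt k v = Fintype.card N ∧ 2 * cnt k v' = Fintype.card N then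
    fun _ _ => 0
  else d.1

/-- The schedules assigned to the agents given the DRMs and communication strategies. -/
def assigned (lam : M → DRM M N S) (x : CommStrat M N S) : M → Sched N S :=
  fun m => drmOut m (lam m) fun n => x n lam m

/-- The action profile induced by the strategies. -/
def act (lam : M → DRM M N S) (x : CommStrat M N S) (sig : ActStrat M N S) :
    ∀ n, S n :=
  fun n => sig n lam (x n lam) (assigned lam x)

/-- Principal `m`'s net payoff. -/
def V (G : M → (∀ n, S n) → ℝ) (lam : M → DRM M N S) (x : CommStrat M N S)
    (sig : ActStrat M N S) (m : M) : ℝ :=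
  G m (act lam x sig) - ∑ n, (assigned lam x m n (act lam x sig n) : ℝ)

/-- Condition 1: agents' actions are optimal given any assigned schedules. -/
def ActOpt (F : ∀ n : N, S n → ℝ) (sig : ActStrat M N S) : Prop :=
  ∀ (n : N) (lam : M → DRM M N S) (kn : M → Option M) (t : M → Sched N S) (s' : S n),
    F n s' + ∑ m, (t m n s' : ℝ) ≤
      F n (sig n lam kn t) + ∑ m, (t m n (sig n lam kn t) : ℝ)

/-- Agent `n`'s continuation payoff when she unilaterally sends the reports `kn`
while the other agents follow `x`. -/
def agentPayoff (F : ∀ n : N, S n → ℝ) (sig : ActStrat M N S) (x : CommStrat M N S)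
    (lam : M → DRM M N S) (n : N) (kn : M → Option M) : ℝ :=
  let t : M → Sched N S :=
    fun m => drmOut m (lam m) (Function.update (fun i => x i lam m) n (kn m));
  F n (sig n lam kn t) + ∑ m, (t m n (sig n lam kn t) : ℝ)

/-- Condition 2: each agent's report profile is a best response given the other
agents' reports and the induced schedules and continuation actions. -/
def MsgOpt (F : ∀ n : N, S n → ℝ) (sig : ActStrat M N S) (x : CommStrat M N S) : Prop :=
  ∀ (n : N) (lam : M → DRM M N S) (kn : M → Option M),
    agentPayoff F sig x lam n kn ≤ agentPayoff F sig x lam n (x n lam)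

/-- Condition 3: no principal gains by unilaterally replacing his DRM with any other DRM. -/
def PrinOpt (G : M → (∀ n, S n) → ℝ) (lam : M → DRM M N S) (x : CommStrat M N S)
    (sig : ActStrat M N S) : Prop :=
  ∀ (m : M) (d : DRM M N S), V G (Function.update lam m d) x sig m ≤ V G lam x sig m

/-- Λ-equilibrium. -/
def LambdaEq (G : M → (∀ n, S n) → ℝ) (F : ∀ n : N, S n → ℝ) (lam : M → DRM M N S)
    (x : CommStrat M N S) (sig : ActStrat M N S) : Prop :=
  ActOpt F sig ∧ MsgOpt F sig x ∧ PrinOpt G lam x sig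

/-- Truthful reporting: agents report `0` to every principal on the equilibrium path,
and all report `m` to every principal after a unilateral deviation by principal `m`. -/
def Truthful (lam : M → DRM M N S) (x : CommStrat M N S) : Prop :=
  (∀ (n : N) (k : M), x n lam k = none) ∧
  ∀ (m : M) (d : DRM M N S), d ≠ lam m →
    ∀ (n : N) (k : M), x n (Function.update lam m d) k = some m

/-- The set `Ŝ(t)` of agents' jointly optimal action profiles given transfer schedules. -/
def Shat (F : ∀ n : N, S n → ℝ) (t : M → Sched N S) : Set (∀ n, S n) :=
  {s | ∀ (n : N) (s' : S n),
    F n s' + ∑ m, (t m n s' : ℝ) ≤ F n (s n) + ∑ m, (t m n (s n) : ℝ)}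

/-- Principal `m`'s worst net payoff over agents' optimal action profiles. -/
def worst (G : M → (∀ n, S n) → ℝ) (F : ∀ n : N, S n → ℝ) (m : M)
    (t : M → Sched N S) : ℝ :=
  sInf ((fun s => G m s - ∑ n, (t m n (s n) : ℝ)) '' Shat F t)

/-- The inner supremum over principal `m`'s own transfer schedules, the other
principals' schedules being fixed. -/
def innerSup (G : M → (∀ n, S n) → ℝ) (F : ∀ n : N, S n → ℝ) (m : M)
    (t : M → Sched N S) : ℝ :=
  sSup {v | ∃ tm : Sched N S, v = worst G F m (Function.update t m tm)}

/-- Principal `m`'s minmax value `V̲^m`. -/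
def minmax (G : M → (∀ n, S n) → ℝ) (F : ∀ n : N, S n → ℝ) (m : M) : ℝ :=
  sInf {v | ∃ t : M → Sched N S, v = innerSup G F m t}

/-- Agent maximization: the allocation is supported by transfer schedules under which
the prescribed actions are optimal for the agents. -/
def AM (F : ∀ n : N, S n → ℝ) (s : ∀ n, S n) (d : M → N → NNReal) : Prop :=
  ∃ t : M → Sched N S, s ∈ Shat F t ∧ ∀ m n, d m n = t m n (s n)

/-- Principal individual rationality. -/
def PIR (G : M → (∀ n, S n) → ℝ) (F : ∀ n : N, S n → ℝ) (s : ∀ n, S n)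
    (d : M → N → NNReal) : Prop :=
  ∀ m : M, minmax G F m ≤ G m s - ∑ n, (d m n : ℝ)

/-- Truthfulness of the reports on the deviator's identity (Definition 3): after any
unilateral choice of mechanism by principal `m`, each agent reports `0` to `m` if `m`
did not deviate, and reports `m` to every other principal if `m` deviated. -/
def TruthfulRep (lam : M → DRM M N S) (x : CommStrat M N S) : Prop :=
  ∀ (m k : M) (n : N) (d : DRM M N S),
    (m = k → d = lam m → x n (Function.update lam m d) k = none) ∧
    (m ≠ k → d ≠ lam m → x n (Function.update lam m d) k = some m)


/-! ### Auxiliary lemmas -/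

lemma cnt_const_self (m : M) : cnt (fun _ : N => some m) (some m) = Fintype.card N := by
  simp [cnt]

lemma cnt_const_ne (m : M) (v : Option M) (hv : v ≠ some m) :
    cnt (fun _ : N => some m) v = 0 := by
  have : ((some m : Option M) ≠ v) := fun h => hv h.symm
  simp [cnt, this]

lemma drmOut_majority (k m : M) (hmk : m ≠ k) (d : DRM M N S)
    (hNpos : 0 < Fintype.card N) :
    drmOut k d (fun _ : N => some m) = d.2 m := by
  have h : ∃ j : M, j ≠ k ∧ Fintype.card N < 2 * cnt (fun _ : N => some m) (some j) :=
    ⟨m, hmk, by rw [cnt_const_self]; omega⟩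
  rw [drmOut, dif_pos h]
  have hc := h.choose_spec
  have hcm : h.choose = m := by
    by_contra hne
    rw [cnt_const_ne m (some h.choose) (fun hh => hne (Option.some.inj hh))] at hc
    omega
  rw [hcm]

lemma drmOut_pair_of_self (m : M) (t : Sched N S) (r : N → Option M) (n₀ : N)
    (h₀ : r n₀ = some m) : drmOut m (t, fun _ => t) r = t := by
  unfold drmOut
  split_ifs with h1 h2
  · rfl
  · exfalso
    obtain ⟨v, v', hvv, hvm, hv'm, hcv, hcv'⟩ := h2
    have key : ∀ w : Option M, w ≠ some m →
        (univ.filter fun n => r n = w) ⊆ univ.erase n₀ := by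
      intro w hw a ha
      rw [Finset.mem_filter] at ha
      refine Finset.mem_erase.mpr ⟨?_, Finset.mem_univ a⟩
      rintro rfl
      exact hw (ha.2.symm.trans h₀)
    have hdisj : Disjoint (univ.filter fun n => r n = v) (univ.filter fun n => r n = v') := by
      rw [Finset.disjoint_left]
      intro a hav hav'
      exact hvv ((Finset.mem_filter.mp hav).2.symm.trans (Finset.mem_filter.mp hav').2)
    have hle := Finset.card_le_card (Finset.union_subset (key v hvm) (key v' hv'm))
    rw [Finset.card_union_of_disjoint hdisj, Finset.card_erase_of_mem (Finset.mem_univ n₀),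
      Finset.card_univ] at hle
    have hpos : 0 < Fintype.card N := Fintype.card_pos_iff.mpr ⟨n₀⟩
    unfold cnt at hcv hcv'
    omega
  · exact if_neg h2

lemma drmOut_pair_or (m : M) (t : Sched N S) (r : N → Option M) :
    drmOut m (t, fun _ => t) r = t ∨ drmOut m (t, fun _ => t) r = fun _ _ => 0 := by
  unfold drmOut
  split_ifs with h1 h2
  · exact Or.inl rfl
  · exact Or.inr (if_pos h2)
  · exact Or.inl (if_neg h2)

lemma sum_split (m : M) (t : M → Sched N S) (n : N) (s : S n) :
    ∑ k, ((t k) n s : ℝ) = (∑ k ∈ univ.erase m, ((t k) n s : ℝ)) + ((t m) n s : ℝ) :=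
  (Finset.sum_erase_add _ _ (Finset.mem_univ m)).symm

/-- **Proposition 1.** `(λ̂, x̂, σ̂)` is a truthful Λ-equilibrium if and only if
`(x̂, σ̂)` satisfies the agents' action-optimality and message-optimality conditions
together with truthful reporting, and no principal gains by unilaterally deviating to a
profile of single transfer schedules `t^m ∈ T^m` (identified with the DRM that assigns
`t^m` for every report profile except the split-report case). -/
theorem proposition1
    (G : M → (∀ n, S n) → ℝ) (F : ∀ n : N, S n → ℝ)
    (hM : 2 ≤ Fintype.card M) (hN : 2 ≤ Fintype.card N)
    (lam : M → DRM M N S) (x : CommStrat M N S) (sig : ActStrat M N S) :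
    (LambdaEq G F lam x sig ∧ TruthfulRep lam x) ↔
      (ActOpt F sig ∧ MsgOpt F sig x ∧ TruthfulRep lam x ∧
        ∀ (m : M) (tm : Sched N S),
          V G (Function.update lam m (tm, fun _ => tm)) x sig m ≤ V G lam x sig m) := by
  constructor
  · rintro ⟨⟨hAct, hMsg, hPrin⟩, hTR⟩
    exact ⟨hAct, hMsg, hTR, fun m tm => hPrin m (tm, fun _ => tm)⟩
  · rintro ⟨hAct, hMsg, hTR, hyp⟩
    refine ⟨⟨hAct, hMsg, ?_⟩, hTR⟩
    intro m d
    by_cases hd : d = lam m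
    · rw [hd, Function.update_eq_self]
    · have hNpos : 0 < Fintype.card N := by omega
      obtain ⟨n₀⟩ : Nonempty N := Fintype.card_pos_iff.mp hNpos
      set lamD := Function.update lam m d with hlamD
      have hrepD : ∀ (n : N) (k : M), k ≠ m → x n lamD k = some m :=
        fun n k hk => (hTR m k n d).2 (Ne.symm hk) hd
      have hassD : ∀ k : M, k ≠ m → assigned lamD x k = (lam k).2 m := by
        intro k hk
        have hx : (fun n => x n lamD k) = fun _ : N => some m :=
          funext fun n => hrepD n k hk
        show drmOut k (lamD k) (fun n => x n lamD k) = (lam k).2 m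
        rw [hx, hlamD, Function.update_of_ne hk]
        exact drmOut_majority k m (Ne.symm hk) (lam k) hNpos
      set s' := act lamD x sig with hs'
      set tm' := assigned lamD x m with htm'
      have hoptD : ∀ (n : N) (s₀ : S n),
          F n s₀ + ∑ k, ((assigned lamD x k) n s₀ : ℝ) ≤
          F n (s' n) + ∑ k, ((assigned lamD x k) n (s' n) : ℝ) :=
        fun n s₀ => hAct n lamD (x n lamD) (assigned lamD x) s₀
      have hsumD : ∀ (n : N) (s : S n),
          ∑ k, ((assigned lamD x k) n s : ℝ)
            = (∑ k ∈ univ.erase m, (((lam k).2 m) n s : ℝ)) + (tm' n s : ℝ) := by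
        intro n s
        rw [sum_split m, ← htm']
        congr 1
        exact Finset.sum_congr rfl fun k hk => by
          rw [hassD k (Finset.ne_of_mem_erase hk)]
      set tmx : NNReal → Sched N S := fun ε n s => tm' n s + if s = s' n then ε else 0
        with htmx
      have step : ∀ ε : NNReal, 0 < ε →
          ((tmx ε, fun _ => tmx ε) : DRM M N S) ≠ lam m →
          V G lamD x sig m ≤ V G lam x sig m + (Fintype.card N : ℝ) * (ε : ℝ) := by
        intro ε hε hgood
        set lam2 := Function.update lam m (tmx ε, fun _ => tmx ε) with hlam2
        have hrep2 : ∀ (n : N) (k : M), k ≠ m → x n lam2 k = some m :=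
          fun n k hk => (hTR m k n (tmx ε, fun _ => tmx ε)).2 (Ne.symm hk) hgood
        have hass2 : ∀ k : M, k ≠ m → assigned lam2 x k = (lam k).2 m := by
          intro k hk
          have hx : (fun n => x n lam2 k) = fun _ : N => some m :=
            funext fun n => hrep2 n k hk
          show drmOut k (lam2 k) (fun n => x n lam2 k) = (lam k).2 m
          rw [hx, hlam2, Function.update_of_ne hk (v := ((tmx ε, fun _ => tmx ε) : DRM M N S)) (f := lam)]
          exact drmOut_majority k m (Ne.symm hk) (lam k) hNpos
        have hassm : assigned lam2 x m
            = drmOut m (tmx ε, fun _ => tmx ε) (fun n => x n lam2 m) := by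
          show drmOut m (lam2 m) (fun n => x n lam2 m) = _
          rw [hlam2, Function.update_self (a := m) (v := ((tmx ε, fun _ => tmx ε) : DRM M N S)) (f := lam)]
        have hsum2 : ∀ (n : N) (s : S n),
            ∑ k, ((assigned lam2 x k) n s : ℝ)
              = (∑ k ∈ univ.erase m, (((lam k).2 m) n s : ℝ))
                + ((assigned lam2 x m) n s : ℝ) := by
          intro n s
          rw [sum_split m]
          congr 1
          exact Finset.sum_congr rfl fun k hk => by
            rw [hass2 k (Finset.ne_of_mem_erase hk)]
        have etmx_self : ∀ n : N, ((tmx ε n (s' n) : NNReal) : ℝ) = (tm' n (s' n) : ℝ) + (ε : ℝ) := by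
          intro n
          rw [htmx]
          simp
        have etmx_ne : ∀ (n : N) (s : S n), s ≠ s' n →
            ((tmx ε n s : NNReal) : ℝ) = (tm' n s : ℝ) := by
          intro n s hs
          rw [htmx]
          simp [hs]
        rcases drmOut_pair_or m (tmx ε) (fun n => x n lam2 m) with hP | hP
        · -- no split: the simple deviation replicates the DRM deviation up to ε
          have hPm : assigned lam2 x m = tmx ε := hassm.trans hP
          have hacts : ∀ n, act lam2 x sig n = s' n := by
            intro n
            by_contra hne
            have h1 : F n (s' n) + ∑ k, ((assigned lam2 x k) n (s' n) : ℝ) ≤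
                F n (act lam2 x sig n) + ∑ k, ((assigned lam2 x k) n (act lam2 x sig n) : ℝ) :=
              hAct n lam2 (x n lam2) (assigned lam2 x) (s' n)
            have h2 := hoptD n (act lam2 x sig n)
            rw [hsum2 n (s' n), hsum2 n (act lam2 x sig n), hPm] at h1
            rw [hsumD n (act lam2 x sig n), hsumD n (s' n)] at h2
            rw [etmx_self n, etmx_ne n (act lam2 x sig n) hne] at h1
            have hεpos : (0:ℝ) < ε := hε
            linarith
          have hacteq : act lam2 x sig = s' := funext hacts
          have esum : ∑ n : N, ((tmx ε n (s' n) : NNReal) : ℝ)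
              = (∑ n : N, (tm' n (s' n) : ℝ)) + (Fintype.card N : ℝ) * (ε : ℝ) := by
            rw [Finset.sum_congr rfl (fun n _ => etmx_self n), Finset.sum_add_distrib,
              Finset.sum_const, Finset.card_univ, nsmul_eq_mul]
          have hV2 : V G lam2 x sig m
              = V G lamD x sig m - (Fintype.card N : ℝ) * (ε : ℝ) := by
            have hVD : V G lamD x sig m = G m s' - ∑ n : N, (tm' n (s' n) : ℝ) := rfl
            have hV2' : V G lam2 x sig m
                = G m (act lam2 x sig)
                  - ∑ n : N, ((assigned lam2 x m) n (act lam2 x sig n) : ℝ) := rfl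
            rw [hV2', hacteq, hPm, esum, hVD]
            ring
          have h9 : V G lam2 x sig m ≤ V G lam x sig m := by
            rw [hlam2]
            exact hyp m (tmx ε)
          linarith
        · -- split report outcome: impossible given message optimality
          exfalso
          have hPm : assigned lam2 x m = fun _ _ => 0 := hassm.trans hP
          set kn' := Function.update (x n₀ lam2) m (some m) with hkn'
          set t' : M → Sched N S :=
            fun k => drmOut k (lam2 k) (Function.update (fun i => x i lam2 k) n₀ (kn' k))
            with ht'
          have ht'k : ∀ k : M, k ≠ m → t' k = (lam k).2 m := by
            intro k hk
            have h1 : kn' k = x n₀ lam2 k := by rw [hkn', Function.update_of_ne hk]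
            have h2 : Function.update (fun i => x i lam2 k) n₀ (x n₀ lam2 k)
                = fun i => x i lam2 k := Function.update_eq_self n₀ (fun i => x i lam2 k)
            have : t' k = assigned lam2 x k := by
              rw [ht']
              show drmOut k (lam2 k) _ = _
              rw [h1, h2]
              rfl
            rw [this]
            exact hass2 k hk
          have ht'm : t' m = tmx ε := by
            rw [ht']
            show drmOut m (lam2 m) (Function.update (fun i => x i lam2 m) n₀ (kn' m)) = _
            rw [hlam2, Function.update_self (a := m) (v := ((tmx ε, fun _ => tmx ε) : DRM M N S)) (f := lam)]
            exact drmOut_pair_of_self m (tmx ε) _ n₀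
              (by rw [Function.update_self, hkn', Function.update_self])
          have hsumt' : ∀ (s : S n₀), ∑ k, ((t' k) n₀ s : ℝ)
              = (∑ k ∈ univ.erase m, (((lam k).2 m) n₀ s : ℝ)) + ((tmx ε) n₀ s : ℝ) := by
            intro s
            rw [sum_split m, ht'm]
            congr 1
            exact Finset.sum_congr rfl fun k hk => by
              rw [ht'k k (Finset.ne_of_mem_erase hk)]
          have hmo : agentPayoff F sig x lam2 n₀ kn' ≤ agentPayoff F sig x lam2 n₀ (x n₀ lam2) :=
            hMsg n₀ lam2 kn'
          have hL : agentPayoff F sig x lam2 n₀ kn'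
              = F n₀ (sig n₀ lam2 kn' t') + ∑ k, ((t' k) n₀ (sig n₀ lam2 kn' t') : ℝ) := rfl
          have et : (fun k => drmOut k (lam2 k)
                (Function.update (fun i => x i lam2 k) n₀ (x n₀ lam2 k)))
              = assigned lam2 x := by
            funext k
            have h2 : Function.update (fun i => x i lam2 k) n₀ (x n₀ lam2 k)
                = fun i => x i lam2 k := Function.update_eq_self n₀ (fun i => x i lam2 k)
            rw [h2]
            rfl
          have hR : agentPayoff F sig x lam2 n₀ (x n₀ lam2)
              = F n₀ (act lam2 x sig n₀)
                + ∑ k, ((assigned lam2 x k) n₀ (act lam2 x sig n₀) : ℝ) := by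
            show F n₀ (sig n₀ lam2 (x n₀ lam2) (fun k => drmOut k (lam2 k)
                (Function.update (fun i => x i lam2 k) n₀ (x n₀ lam2 k)))) + _ = _
            rw [et]
            rfl
          have h1 : F n₀ (s' n₀) + ∑ k, ((t' k) n₀ (s' n₀) : ℝ) ≤
              F n₀ (sig n₀ lam2 kn' t') + ∑ k, ((t' k) n₀ (sig n₀ lam2 kn' t') : ℝ) :=
            hAct n₀ lam2 kn' t' (s' n₀)
          set σ₂ := act lam2 x sig n₀
          set sHat := sig n₀ lam2 kn' t'
          have h3 := hoptD n₀ σ₂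
          rw [hsumD n₀ σ₂, hsumD n₀ (s' n₀)] at h3
          rw [hsumt' (s' n₀), hsumt' sHat] at h1
          rw [hL, hR, hsumt' sHat, hsum2 n₀ σ₂, hPm] at hmo
          rw [etmx_self n₀] at h1
          have hεpos : (0:ℝ) < ε := hε
          have htm'nn : (0:ℝ) ≤ (tm' n₀ σ₂ : ℝ) := (tm' n₀ σ₂).coe_nonneg
          simp only [NNReal.coe_zero] at hmo
          linarith
      have key : ∀ δ : ℝ, 0 < δ → V G lamD x sig m ≤ V G lam x sig m + δ := by
        intro δ hδ
        have hcpos : (0:ℝ) < (Fintype.card N : ℝ) := by exact_mod_cast hNpos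
        set ε₁ : NNReal := Real.toNNReal (δ / (Fintype.card N : ℝ)) with hε₁
        have hdivpos : (0:ℝ) < δ / (Fintype.card N : ℝ) := div_pos hδ hcpos
        have hε₁pos : 0 < ε₁ := Real.toNNReal_pos.mpr hdivpos
        have hcoe : ((ε₁ : NNReal) : ℝ) = δ / (Fintype.card N : ℝ) :=
          Real.coe_toNNReal _ hdivpos.le
        have hcε : (Fintype.card N : ℝ) * (ε₁ : ℝ) = δ := by
          rw [hcoe]; field_simp
        by_cases hg : ((tmx ε₁, fun _ => tmx ε₁) : DRM M N S) = lam m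
        · have hg2 : ((tmx (ε₁/2), fun _ => tmx (ε₁/2)) : DRM M N S) ≠ lam m := by
            intro hg2
            have heq : tmx ε₁ = tmx (ε₁/2) := by
              have e1 : tmx ε₁ = (lam m).1 := congrArg Prod.fst hg
              have e2 : tmx (ε₁/2) = (lam m).1 := congrArg Prod.fst hg2
              rw [e1, e2]
            have heval := congrFun (congrFun heq n₀) (s' n₀)
            rw [htmx] at heval
            simp only [if_pos rfl] at heval
            have heval' : (tm' n₀ (s' n₀) : ℝ) + (ε₁ : ℝ)
                = (tm' n₀ (s' n₀) : ℝ) + ((ε₁/2 : NNReal) : ℝ) := by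
              exact_mod_cast congrArg (fun z : NNReal => (z : ℝ)) heval
            have hhalf : ((ε₁/2 : NNReal) : ℝ) = (ε₁ : ℝ)/2 := by
              rw [NNReal.coe_div]; norm_num
            have hε₁posR : (0:ℝ) < (ε₁ : ℝ) := hε₁pos
            rw [hhalf] at heval'
            linarith
          have hε₂pos : 0 < ε₁/2 := by positivity
          have hstep := step (ε₁/2) hε₂pos hg2
          have hhalf : ((ε₁/2 : NNReal) : ℝ) = (ε₁ : ℝ)/2 := by
            rw [NNReal.coe_div]; norm_num
          rw [hhalf] at hstep
          have hε₁posR : (0:ℝ) < (ε₁ : ℝ) := hε₁pos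
          nlinarith
        · have hstep := step ε₁ hε₁pos hg
          rw [hcε] at hstep
          exact hstep
      by_contra hcon
      push_neg at hcon
      have := key ((V G lamD x sig m - V G lam x sig m) / 2) (by linarith)
      linarith


end CMGPTA

end
end

section
/- (Theorem 1, PIR direction) In any truthful Λ-equilibrium (λ̂, x̂, σ̂) of the CMGPTA with deviator-reporting mechanisms, the equilibrium allocation (ŝ, d̂) satisfies PIR: for every principal m, G^m(ŝ) − Σ_{n∈N} d̂_n^m ≥ V̲^m. -/
open scoped Classical
open Finset

noncomputable section

namespace CMGPTA

variable {M N : Type*} [Fintype M] [Fintype N] [DecidableEq M] [DecidableEq N]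
variable {S : N → Type*} [∀ n, Fintype (S n)] [∀ n, Nonempty (S n)]

/-- Auxiliary: the set `Ŝ(t)` is nonempty since each agent's action set is finite
and nonempty. -/
lemma shat_nonempty' {M N : Type*} [Fintype M] [Fintype N] {S : N → Type*}
    [∀ n, Fintype (S n)] [∀ n, Nonempty (S n)]
    (F : ∀ n : N, S n → ℝ) (t : M → Sched N S) : (Shat F t).Nonempty := by
  have h : ∀ n : N, ∃ s : S n, ∀ s' : S n,
      F n s' + ∑ m, (t m n s' : ℝ) ≤ F n s + ∑ m, (t m n s : ℝ) := by
    intro n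
    obtain ⟨s, _, hs⟩ := Finset.exists_max_image (Finset.univ : Finset (S n))
      (fun s => F n s + ∑ m, (t m n s : ℝ)) ⟨Classical.arbitrary (S n), Finset.mem_univ _⟩
    exact ⟨s, fun s' => hs s' (Finset.mem_univ _)⟩
  choose s hs using h
  exact ⟨s, fun n s' => hs n s'⟩

/-- **Theorem 1, PIR direction.** In any truthful Λ-equilibrium of the CMGPTA with
deviator-reporting mechanisms, the equilibrium allocation `(ŝ, d̂)` satisfies PIR:
every principal's net payoff is at least his minmax value. -/
theorem pir_direction
    (G : M → (∀ n, S n) → ℝ) (F : ∀ n : N, S n → ℝ)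
    (hM : 2 ≤ Fintype.card M) (hN : 2 ≤ Fintype.card N)
    (lam : M → DRM M N S) (x : CommStrat M N S) (sig : ActStrat M N S)
    (heq : LambdaEq G F lam x sig) (htr : Truthful lam x) :
    ∀ m : M,
      minmax G F m ≤
        G m (act lam x sig) - ∑ n, (assigned lam x m n (act lam x sig n) : ℝ) := by
  intro m
  have hNpos : 0 < Fintype.card N := by omega
  have hNe : Nonempty N := Fintype.card_pos_iff.mp hNpos
  -- bounds on gross payoffs
  have hPiNe : ((Finset.univ : Finset (∀ n, S n)).image (G m)).Nonempty :=
    ⟨G m (Classical.arbitrary _), Finset.mem_image_of_mem _ (Finset.mem_univ _)⟩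
  set minG : ℝ := ((Finset.univ : Finset (∀ n, S n)).image (G m)).min' hPiNe with hminG
  set maxG : ℝ := ((Finset.univ : Finset (∀ n, S n)).image (G m)).max' hPiNe with hmaxG
  have hminle : ∀ s : ∀ n, S n, minG ≤ G m s := fun s =>
    Finset.min'_le _ _ (Finset.mem_image_of_mem _ (Finset.mem_univ _))
  have hlemax : ∀ s : ∀ n, S n, G m s ≤ maxG := fun s =>
    Finset.le_max' _ _ (Finset.mem_image_of_mem _ (Finset.mem_univ _))
  -- the worst payoff is at most maxG, for any transfer schedules
  have hworst_le_max : ∀ t : M → Sched N S, worst G F m t ≤ maxG := by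
    intro t
    obtain ⟨s, hs⟩ := shat_nonempty' F t
    have h1 : worst G F m t ≤ G m s - ∑ n, (t m n (s n) : ℝ) :=
      csInf_le (((Shat F t).toFinite.image _).bddBelow) ⟨s, hs, rfl⟩
    have h2 : (0 : ℝ) ≤ ∑ n, (t m n (s n) : ℝ) :=
      Finset.sum_nonneg fun n _ => (t m n (s n)).coe_nonneg
    have := hlemax s
    linarith
  -- the inner supremum set is bounded above
  have hbddAbove : ∀ t : M → Sched N S,
      BddAbove {v | ∃ tm : Sched N S, v = worst G F m (Function.update t m tm)} :=
    fun t => ⟨maxG, by rintro v ⟨tm, rfl⟩; exact hworst_le_max _⟩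
  -- minG lower-bounds every inner supremum
  have hmin_le_inner : ∀ t : M → Sched N S, minG ≤ innerSup G F m t := by
    intro t
    have hw : minG ≤ worst G F m (Function.update t m (fun _ _ => 0)) := by
      refine le_csInf ((shat_nonempty' F _).image _) ?_
      rintro b ⟨s, _, rfl⟩
      have : ∑ n, ((Function.update t m (fun _ _ => (0 : NNReal)) m n (s n) : NNReal) : ℝ)
          = 0 := by simp [Function.update]
      dsimp only
      rw [this]
      simpa using hminle s
    exact le_trans hw (le_csSup (hbddAbove t) ⟨_, rfl⟩)
  -- the punishment schedules of the other principals against m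
  set tpun : M → Sched N S := fun j => (lam j).2 m with htpun
  -- key claim: against those punishments, any own schedule gives at most the eq. payoff
  have claimC : ∀ tm : Sched N S,
      worst G F m (Function.update tpun m tm) ≤ V G lam x sig m := by
    intro tm
    set d : DRM M N S := (tm, fun k n s => (lam m).2 k n s + 1) with hd
    have hdne : d ≠ lam m := by
      intro h
      obtain ⟨n⟩ := hNe
      have h2 := congrArg (fun z : DRM M N S => z.2 m n (Classical.arbitrary (S n))) h
      simp only [hd] at h2
      have := congrArg NNReal.toReal h2
      push_cast at this
      linarith
    set lam' : M → DRM M N S := Function.update lam m d with hlam'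
    have hrep : ∀ (n : N) (k : M), x n lam' k = some m := htr.2 m d hdne
    -- counting reports when everyone reports m
    have cntAll : cnt (fun _ : N => (some m : Option M)) (some m) = Fintype.card N := by
      simp [cnt]
    have cntOther : ∀ v : Option M, v ≠ some m →
        cnt (fun _ : N => (some m : Option M)) v = 0 := by
      intro v hv
      simp only [cnt, Finset.card_eq_zero, Finset.filter_eq_empty_iff]
      intro n _
      exact fun h => hv h.symm
    -- the assigned schedules after the deviation
    have hass : assigned lam' x = Function.update tpun m tm := by
      funext j
      have hk : (fun n => x n lam' j) = fun _ : N => (some m : Option M) := by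
        funext n; exact hrep n j
      by_cases hj : j = m
      · subst hj
        have h1 : ¬∃ j' : M, j' ≠ j ∧
            Fintype.card N < 2 * cnt (fun _ : N => (some j : Option M)) (some j') := by
          rintro ⟨j', hj', hlt⟩
          rw [cntOther (some j') (by simpa using hj')] at hlt
          omega
        have h2 : ¬∃ v v' : Option M, v ≠ v' ∧ v ≠ some j ∧ v' ≠ some j ∧
            2 * cnt (fun _ : N => (some j : Option M)) v = Fintype.card N ∧
            2 * cnt (fun _ : N => (some j : Option M)) v' = Fintype.card N := by
          rintro ⟨v, v', -, hv, -, hcv, -⟩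
          rw [cntOther v hv] at hcv
          omega
        simp only [assigned, hk, Function.update_self, drmOut, dif_neg h1, if_neg h2,
          show lam' j = d from Function.update_self _ _ _, hd]
        exact (dite_cond_eq_false (eq_false (show ¬∃ j' : M, j' ≠ j ∧ Fintype.card N < 2 * cnt (fun n => x n lam' j) (some j') by rw [hk]; exact h1))).trans (ite_cond_eq_false _ _ (eq_false h2))
      · have hlamj : lam' j = lam j := Function.update_of_ne hj _ _
        have h1 : ∃ j' : M, j' ≠ j ∧
            Fintype.card N < 2 * cnt (fun _ : N => (some m : Option M)) (some j') := by
          refine ⟨m, fun h => hj h.symm, ?_⟩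
          rw [cntAll]; omega
        have hch : h1.choose = m := by
          by_contra hne
          have := h1.choose_spec.2
          rw [cntOther (some h1.choose) (by simpa using hne)] at this
          omega
        simp only [assigned, hk, hlamj, drmOut, dif_pos h1, hch,
          Function.update_of_ne hj, htpun]
    -- the induced action profile is jointly optimal for the agents
    set s' : ∀ n, S n := act lam' x sig with hs'
    have hmem : s' ∈ Shat F (Function.update tpun m tm) := by
      intro n a
      rw [← hass]
      exact heq.1 n lam' (x n lam') (assigned lam' x) a
    have hinf : worst G F m (Function.update tpun m tm) ≤
        G m s' - ∑ n, ((Function.update tpun m tm) m n (s' n) : ℝ) :=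
      csInf_le (((Shat F (Function.update tpun m tm)).toFinite.image _).bddBelow)
        ⟨s', hmem, rfl⟩
    have hVdev : G m s' - ∑ n, ((Function.update tpun m tm) m n (s' n) : ℝ) =
        V G lam' x sig m := by
      simp only [V, hs', hass]
    calc worst G F m (Function.update tpun m tm)
        ≤ V G lam' x sig m := by rw [← hVdev]; exact hinf
      _ ≤ V G lam x sig m := heq.2.2 m d
  -- assemble
  have h1 : minmax G F m ≤ innerSup G F m tpun :=
    csInf_le ⟨minG, by rintro v ⟨t, rfl⟩; exact hmin_le_inner t⟩ ⟨tpun, rfl⟩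
  have h2 : innerSup G F m tpun ≤ V G lam x sig m := by
    refine csSup_le ⟨_, (fun _ _ => 0 : Sched N S), rfl⟩ ?_
    rintro v ⟨tm, rfl⟩
    exact claimC tm
  exact le_trans h1 h2

end CMGPTA

end
end

section
/- (Proposition 2) In the game with two principals, two agents with two actions each, F_n ≡ 0 for both agents, and nonnegative gross payoffs, an allocation (s,d) ∈ S × ℝ≥0^{2×2} is a truthful Λ-equilibrium allocation if and only if it satisfies AM and, for each principal m ∈ {1,2}, G^m(s) − Σ_{n∈N} d_n^m ≥ G̲^m, where G̲^m = min_{s'∈S} G^m(s') is principal m's minimum gross payoff. -/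
open scoped Classical
open Finset

noncomputable section

namespace CMGPTA

variable {M N : Type*} [Fintype M] [Fintype N] [DecidableEq M] [DecidableEq N]
variable {S : N → Type*} [∀ n, Fintype (S n)] [∀ n, Nonempty (S n)]

/- ===== Auxiliary development for Proposition 2 ===== -/

section Prop2Aux

/-- The canonical supporting transfer schedule: principal `m` pays agent `n` the
amount `d m n` at the prescribed action `s n` and zero elsewhere. -/
def myT (s : ∀ _ : Fin 2, Fin 2) (d : Fin 2 → Fin 2 → NNReal) (m : Fin 2) :
    Sched (Fin 2) (fun _ : Fin 2 => Fin 2) := fun n a => if a = s n then d m n else 0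

/-- An action profile minimizing `G m`. -/
def sbar (G : Fin 2 → (∀ _ : Fin 2, Fin 2) → ℝ) (m : Fin 2) : ∀ _ : Fin 2, Fin 2 :=
  (Finset.exists_mem_eq_inf' (Finset.univ_nonempty) (G m)).choose

lemma sbar_spec (G : Fin 2 → (∀ _ : Fin 2, Fin 2) → ℝ) (m : Fin 2) :
    Finset.univ.inf' Finset.univ_nonempty (G m) = G m (sbar G m) :=
  (Finset.exists_mem_eq_inf' (Finset.univ_nonempty) (G m)).choose_spec.2

/-- The size of the punishment bonus. -/
def Cval (G : Fin 2 → (∀ _ : Fin 2, Fin 2) → ℝ) (d : Fin 2 → Fin 2 → NNReal)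
    (j m' : Fin 2) : NNReal :=
  Real.toNNReal (Finset.univ.sup' Finset.univ_nonempty (G m') -
      Finset.univ.inf' Finset.univ_nonempty (G m')) + d j 0 + d j 1

/-- Principal `j`'s punishment schedule against deviator `m'`. -/
def pun (G : Fin 2 → (∀ _ : Fin 2, Fin 2) → ℝ) (s : ∀ _ : Fin 2, Fin 2)
    (d : Fin 2 → Fin 2 → NNReal) (j m' : Fin 2) :
    Sched (Fin 2) (fun _ : Fin 2 => Fin 2) :=
  fun n a => myT s d j n a + if a = sbar G m' n then Cval G d j m' else 0

/-- The equilibrium DRM profile. -/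
def lamEq (G : Fin 2 → (∀ _ : Fin 2, Fin 2) → ℝ) (s : ∀ _ : Fin 2, Fin 2)
    (d : Fin 2 → Fin 2 → NNReal) : Fin 2 → DRM (Fin 2) (Fin 2) (fun _ : Fin 2 => Fin 2) :=
  fun j => (myT s d j, fun m' => pun G s d j m')

/-- The common report sent by the agents at a mechanism profile `lam'`. -/
def rRep (lam₀ lam' : Fin 2 → DRM (Fin 2) (Fin 2) (fun _ : Fin 2 => Fin 2)) :
    Option (Fin 2) :=
  if lam' 0 ≠ lam₀ 0 ∧ lam' 1 = lam₀ 1 then some 0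
  else if lam' 1 ≠ lam₀ 1 ∧ lam' 0 = lam₀ 0 then some 1 else none

/-- The equilibrium communication strategy. -/
def xEq (lam₀ : Fin 2 → DRM (Fin 2) (Fin 2) (fun _ : Fin 2 => Fin 2)) :
    CommStrat (Fin 2) (Fin 2) (fun _ : Fin 2 => Fin 2) :=
  fun _ lam' _ => rRep lam₀ lam'

/-- A maximizer of `g` over `Fin 2` breaking ties in favor of `s0`. -/
def pick (s0 : Fin 2) (g : Fin 2 → ℝ) : Fin 2 := if g (s0 + 1) ≤ g s0 then s0 else s0 + 1

lemma fin2_or : ∀ a b : Fin 2, a = b ∨ a = b + 1 := by decide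

lemma pick_le (s0 : Fin 2) (g : Fin 2 → ℝ) : ∀ a, g a ≤ g (pick s0 g) := by
  intro a
  unfold pick
  split
  · next h => rcases fin2_or a s0 with h' | h' <;> rw [h']; exact h
  · next h => rcases fin2_or a s0 with h' | h' <;> rw [h']; exact le_of_not_ge h

lemma pick_eq (s0 : Fin 2) (g : Fin 2 → ℝ) (h : ∀ a, g a ≤ g s0) : pick s0 g = s0 :=
  if_pos (h _)

/-- The equilibrium action strategy. -/
def sigEq (s : ∀ _ : Fin 2, Fin 2) : ActStrat (Fin 2) (Fin 2) (fun _ : Fin 2 => Fin 2) :=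
  fun n _ _ t => pick (s n) (fun a => ∑ m, (t m n a : ℝ))

lemma cnt_eval (k : Fin 2 → Option (Fin 2)) (u : Option (Fin 2)) :
    cnt (M := Fin 2) k u = (if k 0 = u then 1 else 0) + (if k 1 = u then 1 else 0) := by
  rw [cnt, Finset.card_filter, Fin.sum_univ_two]

lemma drmOut_nodev (m : Fin 2) (dd : DRM (Fin 2) (Fin 2) (fun _ : Fin 2 => Fin 2))
    (k : Fin 2 → Option (Fin 2)) (hk : ∀ n, k n = none ∨ k n = some m) :
    drmOut m dd k = dd.1 := by
  have hc : ∀ u : Option (Fin 2), u ≠ none → u ≠ some m → cnt (M := Fin 2) k u = 0 := by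
    intro u h1 h2
    rw [cnt_eval]
    rcases hk 0 with h | h <;> rcases hk 1 with h' | h' <;>
      simp [h, h', Ne.symm h1, Ne.symm h2]
  rw [drmOut, dif_neg]
  refine if_neg ?_
  · rintro ⟨v, v', hne, hv, hv', hcv, hcv'⟩
    by_cases h0 : v = none
    · by_cases h0' : v' = none
      · exact hne (h0.trans h0'.symm)
      · rw [hc v' h0' hv'] at hcv'
        simp [Fintype.card_fin] at hcv'
    · rw [hc v h0 hv] at hcv
      simp [Fintype.card_fin] at hcv
  · rintro ⟨j, hj, hlt⟩
    rw [hc (some j) (by simp) (by simpa using hj)] at hlt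
    simp [Fintype.card_fin] at hlt

lemma drmOut_pun (m j : Fin 2) (hjm : j ≠ m) (dd : DRM (Fin 2) (Fin 2) (fun _ : Fin 2 => Fin 2))
    (k : Fin 2 → Option (Fin 2)) (hk : ∀ n, k n = some j) :
    drmOut m dd k = dd.2 j := by
  have hcnt : cnt (M := Fin 2) k (some j) = 2 := by
    rw [cnt_eval]; simp [hk 0, hk 1]
  have hex : ∃ i : Fin 2, i ≠ m ∧ Fintype.card (Fin 2) < 2 * cnt (M := Fin 2) k (some i) :=
    ⟨j, hjm, by rw [hcnt, Fintype.card_fin]; norm_num⟩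
  rw [drmOut, dif_pos hex]
  have hch : hex.choose = j := by
    by_contra hne
    have hje : j ≠ hex.choose := fun h => hne h.symm
    have hsj : (some j : Option (Fin 2)) ≠ some hex.choose := by simpa using hje
    have h0 : cnt (M := Fin 2) k (some hex.choose) = 0 := by
      rw [cnt_eval, hk 0, hk 1, if_neg hsj]
    have h2 := hex.choose_spec.2
    rw [h0] at h2
    simp [Fintype.card_fin] at h2
  rw [hch]

lemma drmOut_zero (m j : Fin 2) (hjm : j ≠ m) (dd : DRM (Fin 2) (Fin 2) (fun _ : Fin 2 => Fin 2))
    (k : Fin 2 → Option (Fin 2))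
    (hk : (k 0 = none ∧ k 1 = some j) ∨ (k 0 = some j ∧ k 1 = none)) :
    drmOut m dd k = fun _ _ => 0 := by
  have hcn : cnt (M := Fin 2) k none = 1 := by
    rcases hk with ⟨h0, h1⟩ | ⟨h0, h1⟩ <;> rw [cnt_eval] <;> simp [h0, h1]
  have hcj : cnt (M := Fin 2) k (some j) = 1 := by
    rcases hk with ⟨h0, h1⟩ | ⟨h0, h1⟩ <;> rw [cnt_eval] <;> simp [h0, h1]
  have hle : ∀ i : Fin 2, cnt (M := Fin 2) k (some i) ≤ 1 := by
    intro i
    rcases hk with ⟨h0, h1⟩ | ⟨h0, h1⟩ <;> rw [cnt_eval] <;> simp [h0, h1] <;>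
      split <;> simp
  rw [drmOut, dif_neg]
  refine if_pos ?_
  · exact ⟨none, some j, by simp, by simp, by simpa using hjm,
      by rw [hcn, Fintype.card_fin], by rw [hcj, Fintype.card_fin]⟩
  · rintro ⟨i, hi, hlt⟩
    have := hle i
    rw [Fintype.card_fin] at hlt
    omega

lemma drmOut_mix (m j : Fin 2) (hjm : j ≠ m) (dd : DRM (Fin 2) (Fin 2) (fun _ : Fin 2 => Fin 2))
    (k : Fin 2 → Option (Fin 2))
    (hk : (k 0 = some m ∧ k 1 = some j) ∨ (k 0 = some j ∧ k 1 = some m)) :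
    drmOut m dd k = dd.1 := by
  have hle : ∀ i : Fin 2, cnt (M := Fin 2) k (some i) ≤ 1 := by
    intro i
    rcases hk with ⟨h0, h1⟩ | ⟨h0, h1⟩ <;> rw [cnt_eval] <;> rw [h0, h1] <;>
      · simp only [Option.some.injEq]
        split <;> split <;> try omega
        all_goals (next ha hb => exact absurd (hb.trans ha.symm) hjm)
  have hval : ∀ u : Option (Fin 2), u ≠ some m →
      2 * cnt (M := Fin 2) k u = Fintype.card (Fin 2) → u = some j := by
    intro u hu hcu
    rw [cnt_eval, Fintype.card_fin] at hcu
    match u with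
    | none => rcases hk with ⟨h0, h1⟩ | ⟨h0, h1⟩ <;> rw [h0, h1] at hcu <;> simp at hcu
    | some i =>
      rcases hk with ⟨h0, h1⟩ | ⟨h0, h1⟩ <;> rw [h0, h1] at hcu <;>
        · simp only [Option.some.injEq] at hcu ⊢
          have him : m ≠ i := by simpa using (Ne.symm hu)
          by_contra hij
          have hji' : j ≠ i := fun h => hij h.symm
          simp [him, hji'] at hcu
  rw [drmOut, dif_neg]
  refine if_neg ?_
  · rintro ⟨v, v', hne, hv, hv', hcv, hcv'⟩
    exact hne ((hval v hv hcv).trans (hval v' hv' hcv').symm)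
  · rintro ⟨i, hi, hlt⟩
    have := hle i
    rw [Fintype.card_fin] at hlt
    omega

lemma pun_nonneg_le (G : Fin 2 → (∀ _ : Fin 2, Fin 2) → ℝ) (s : ∀ _ : Fin 2, Fin 2)
    (d : Fin 2 → Fin 2 → NNReal) (j m' n a : Fin 2) :
    myT s d j n a ≤ pun G s d j m' n a := le_self_add

lemma fin2_zao : (0 : Fin 2) + 1 = 1 := rfl

lemma hdom (G : Fin 2 → (∀ _ : Fin 2, Fin 2) → ℝ) (s : ∀ _ : Fin 2, Fin 2)
    (d : Fin 2 → Fin 2 → NNReal)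
    (lam' : Fin 2 → DRM (Fin 2) (Fin 2) (fun _ : Fin 2 => Fin 2))
    (n : Fin 2) (w : Option (Fin 2)) (m n' a : Fin 2) :
    (drmOut m (lam' m) (Function.update (fun _ : Fin 2 => rRep (lamEq G s d) lam') n w) n' a : ℝ)
      ≤ (drmOut m (lam' m) (fun _ : Fin 2 => rRep (lamEq G s d) lam') n' a : ℝ) := by
  set lam₀ := lamEq G s d with hlam₀
  set k := Function.update (fun _ : Fin 2 => rRep lam₀ lam') n w with hkdef
  have hkn : k n = w := by rw [hkdef]; simp
  have hko : ∀ i, i ≠ n → k i = rRep lam₀ lam' := fun i hi => by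
    rw [hkdef, Function.update_apply, if_neg hi]
  have hall : ∀ i, k i = rRep lam₀ lam' ∨ k i = w := by
    intro i
    by_cases hi : i = n
    · subst hi; right; exact hkn
    · left; exact hko i hi
  have hpair : ∀ v : Option (Fin 2), rRep lam₀ lam' = v →
      (k 0 = v ∧ k 1 = w) ∨ (k 0 = w ∧ k 1 = v) := by
    intro v hv
    rcases fin2_or n 0 with hn | hn <;> subst hn
    · right
      exact ⟨hkn, by rw [hko 1 (by decide), hv]⟩
    · left
      refine ⟨by rw [hko 0 (by decide), hv], ?_⟩
      rw [fin2_zao] at hkn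
      exact hkn
  by_cases h0 : lam' 0 ≠ lam₀ 0 ∧ lam' 1 = lam₀ 1
  · have hv : rRep lam₀ lam' = some 0 := by unfold rRep; rw [if_pos h0]
    rcases fin2_or m 0 with hm | hm <;> subst hm
    · -- deviating principal 0: schedule is (lam' 0).1 whatever the report
      have he : (drmOut 0 (lam' 0) fun _ : Fin 2 => rRep lam₀ lam') = (lam' 0).1 :=
        drmOut_nodev 0 _ _ (fun i => Or.inr hv)
      have hd : drmOut 0 (lam' 0) k = (lam' 0).1 := by
        rcases w with _ | i
        · exact drmOut_nodev 0 _ _ (fun i => (hall i).elim (fun h => Or.inr (h.trans hv)) Or.inl)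
        · rcases fin2_or i 0 with hi | hi <;> subst hi
          · exact drmOut_nodev 0 _ _ (fun i => Or.inr ((hall i).elim (fun h => h.trans hv) id))
          · refine drmOut_mix 0 (0 + 1) (by decide) _ _ ?_
            rcases hpair (some 0) hv with ⟨ha, hb⟩ | ⟨ha, hb⟩
            · exact Or.inl ⟨ha, hb⟩
            · exact Or.inr ⟨ha, hb⟩
      rw [hd, he]
    · -- non-deviating principal 1
      rw [fin2_zao]
      have he : (drmOut 1 (lam' 1) fun _ : Fin 2 => rRep lam₀ lam') = pun G s d 1 0 := by
        rw [drmOut_pun 1 0 (by decide) _ _ (fun i => hv), h0.2, hlam₀]; rfl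
      rw [he]
      rcases w with _ | i
      · have hd : drmOut 1 (lam' 1) k = fun _ _ => 0 := by
          refine drmOut_zero 1 0 (by decide) _ _ ?_
          rcases hpair (some 0) hv with ⟨ha, hb⟩ | ⟨ha, hb⟩
          · exact Or.inr ⟨ha, hb⟩
          · exact Or.inl ⟨ha, hb⟩
        rw [hd]
        positivity
      · rcases fin2_or i 0 with hi | hi <;> subst hi
        · have hd : drmOut 1 (lam' 1) k = pun G s d 1 0 := by
            rw [drmOut_pun 1 0 (by decide) _ _
              (fun i => (hall i).elim (fun h => h.trans hv) id), h0.2, hlam₀]; rfl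
          rw [hd]
        · have hd : drmOut 1 (lam' 1) k = (lam' 1).1 := by
            refine drmOut_mix 1 0 (by decide) _ _ ?_
            rcases hpair (some 0) hv with ⟨ha, hb⟩ | ⟨ha, hb⟩
            · exact Or.inr ⟨ha, hb⟩
            · exact Or.inl ⟨ha, hb⟩
          rw [hd, h0.2, hlam₀]
          exact_mod_cast pun_nonneg_le G s d 1 0 n' a
  · by_cases h1 : lam' 1 ≠ lam₀ 1 ∧ lam' 0 = lam₀ 0
    · have hv : rRep lam₀ lam' = some 1 := by unfold rRep; rw [if_neg h0, if_pos h1]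
      rcases fin2_or m 0 with hm | hm <;> subst hm
      · -- non-deviating principal 0
        have he : (drmOut 0 (lam' 0) fun _ : Fin 2 => rRep lam₀ lam') = pun G s d 0 1 := by
          rw [drmOut_pun 0 1 (by decide) _ _ (fun i => hv), h1.2, hlam₀]; rfl
        rw [he]
        rcases w with _ | i
        · have hd : drmOut 0 (lam' 0) k = fun _ _ => 0 := by
            refine drmOut_zero 0 1 (by decide) _ _ ?_
            rcases hpair (some 1) hv with ⟨ha, hb⟩ | ⟨ha, hb⟩
            · exact Or.inr ⟨ha, hb⟩
            · exact Or.inl ⟨ha, hb⟩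
          rw [hd]
          positivity
        · rcases fin2_or i 0 with hi | hi <;> subst hi
          · have hd : drmOut 0 (lam' 0) k = (lam' 0).1 := by
              refine drmOut_mix 0 1 (by decide) _ _ ?_
              rcases hpair (some 1) hv with ⟨ha, hb⟩ | ⟨ha, hb⟩
              · exact Or.inr ⟨ha, hb⟩
              · exact Or.inl ⟨ha, hb⟩
            rw [hd, h1.2, hlam₀]
            exact_mod_cast pun_nonneg_le G s d 0 1 n' a
          · have hd : drmOut 0 (lam' 0) k = pun G s d 0 1 := by
              rw [fin2_zao] at hall
              rw [drmOut_pun 0 1 (by decide) _ _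
                (fun i => (hall i).elim (fun h => h.trans hv) id), h1.2, hlam₀]; rfl
            rw [hd]
      · -- deviating principal 1
        rw [fin2_zao]
        have he : (drmOut 1 (lam' 1) fun _ : Fin 2 => rRep lam₀ lam') = (lam' 1).1 :=
          drmOut_nodev 1 _ _ (fun i => Or.inr hv)
        have hd : drmOut 1 (lam' 1) k = (lam' 1).1 := by
          rcases w with _ | i
          · exact drmOut_nodev 1 _ _ (fun i => (hall i).elim (fun h => Or.inr (h.trans hv)) Or.inl)
          · rcases fin2_or i 0 with hi | hi <;> subst hi
            · refine drmOut_mix 1 0 (by decide) _ _ ?_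
              rcases hpair (some 1) hv with ⟨ha, hb⟩ | ⟨ha, hb⟩
              · exact Or.inl ⟨ha, hb⟩
              · exact Or.inr ⟨ha, hb⟩
            · refine drmOut_nodev 1 _ _ (fun i => Or.inr ((hall i).elim (fun h => h.trans hv) ?_))
              rw [fin2_zao]
              exact id
        rw [hd, he]
    · have hv : rRep lam₀ lam' = none := by unfold rRep; rw [if_neg h0, if_neg h1]
      have he : (drmOut m (lam' m) fun _ : Fin 2 => rRep lam₀ lam') = (lam' m).1 :=
        drmOut_nodev m _ _ (fun i => Or.inl hv)
      rw [he]
      rcases w with _ | i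
      · have hd : drmOut m (lam' m) k = (lam' m).1 :=
          drmOut_nodev m _ _ (fun i => Or.inl ((hall i).elim (fun h => h.trans hv) id))
        rw [hd]
      · by_cases him : i = m
        · subst him
          have hd : drmOut i (lam' i) k = (lam' i).1 :=
            drmOut_nodev i _ _ (fun i' => (hall i').elim (fun h => Or.inl (h.trans hv)) Or.inr)
          rw [hd]
        · have hd : drmOut m (lam' m) k = fun _ _ => 0 := by
            refine drmOut_zero m i him _ _ ?_
            rcases hpair none hv with ⟨ha, hb⟩ | ⟨ha, hb⟩
            · exact Or.inl ⟨ha, hb⟩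
            · exact Or.inr ⟨ha, hb⟩
          rw [hd]
          positivity

lemma fin2_succ_ne : ∀ m : Fin 2, m + 1 ≠ m := by decide

lemma fin2_sum (m : Fin 2) (f : Fin 2 → ℝ) : ∑ i, f i = f m + f (m + 1) := by
  rcases fin2_or m 0 with hm | hm <;> subst hm <;> rw [Fin.sum_univ_two]
  · rfl
  · show f 0 + f 1 = f 1 + f 0
    ring

lemma actopt_main (s : ∀ _ : Fin 2, Fin 2) :
    ActOpt (M := Fin 2) (S := fun _ : Fin 2 => Fin 2) (fun _ _ => 0) (sigEq s) := by
  intro n lam kn t s'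
  show (0:ℝ) + _ ≤ (0:ℝ) + _
  rw [zero_add, zero_add]
  exact pick_le (s n) (fun a => ∑ m, ((t m n a : ℝ))) s'

lemma msg_main (G : Fin 2 → (∀ _ : Fin 2, Fin 2) → ℝ) (s : ∀ _ : Fin 2, Fin 2)
    (d : Fin 2 → Fin 2 → NNReal) :
    MsgOpt (S := fun _ : Fin 2 => Fin 2) (fun _ _ => 0) (sigEq s) (xEq (lamEq G s d)) := by
  intro n lam' kn
  have heq : Function.update (fun _ : Fin 2 => rRep (lamEq G s d) lam') n
      (rRep (lamEq G s d) lam') = fun _ : Fin 2 => rRep (lamEq G s d) lam' := by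
    funext i
    rw [Function.update_apply]
    split <;> rfl
  simp only [agentPayoff, xEq, zero_add]
  rw [heq]
  refine le_trans (Finset.sum_le_sum fun m _ => hdom G s d lam' n (kn m) m n _) ?_
  exact pick_le (s n)
    (fun a => ∑ m, ((drmOut m (lam' m) (fun _ : Fin 2 => rRep (lamEq G s d) lam') n a : ℝ))) _

lemma truthful_main (G : Fin 2 → (∀ _ : Fin 2, Fin 2) → ℝ) (s : ∀ _ : Fin 2, Fin 2)
    (d : Fin 2 → Fin 2 → NNReal) :
    Truthful (lamEq G s d) (xEq (lamEq G s d)) := by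
  refine ⟨fun n k => ?_, fun m dd hne n k => ?_⟩
  · show rRep (lamEq G s d) (lamEq G s d) = none
    unfold rRep
    simp
  · show rRep (lamEq G s d) (Function.update (lamEq G s d) m dd) = some m
    rcases fin2_or m 0 with hm | hm <;> subst hm
    · unfold rRep
      rw [if_pos]
      refine ⟨?_, ?_⟩
      · rw [Function.update_self]; exact hne
      · rw [Function.update_of_ne (by decide)]
    · rw [fin2_zao] at hne ⊢
      unfold rRep
      rw [if_neg, if_pos]
      · refine ⟨?_, ?_⟩
        · rw [Function.update_self]; exact hne
        · rw [Function.update_of_ne (by decide)]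
      · rintro ⟨ha, -⟩
        exact ha (Function.update_of_ne (by decide) _ _)

lemma rRep_self (lam₀ : Fin 2 → DRM (Fin 2) (Fin 2) (fun _ : Fin 2 => Fin 2)) :
    rRep lam₀ lam₀ = none := by unfold rRep; simp

lemma assigned_eq (G : Fin 2 → (∀ _ : Fin 2, Fin 2) → ℝ) (s : ∀ _ : Fin 2, Fin 2)
    (d : Fin 2 → Fin 2 → NNReal) (m : Fin 2) :
    assigned (lamEq G s d) (xEq (lamEq G s d)) m = myT s d m := by
  show drmOut m (lamEq G s d m) (fun i => xEq (lamEq G s d) i (lamEq G s d) m) = myT s d m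
  have hx : (fun i : Fin 2 => xEq (lamEq G s d) i (lamEq G s d) m)
      = fun _ : Fin 2 => (none : Option (Fin 2)) := by
    funext i
    exact rRep_self _
  rw [hx, drmOut_nodev m _ _ (fun i => Or.inl rfl)]
  rfl

lemma act_eq (G : Fin 2 → (∀ _ : Fin 2, Fin 2) → ℝ) (s : ∀ _ : Fin 2, Fin 2)
    (d : Fin 2 → Fin 2 → NNReal) :
    act (lamEq G s d) (xEq (lamEq G s d)) (sigEq s) = s := by
  funext n
  show pick (s n) (fun a => ∑ m, ((assigned (lamEq G s d) (xEq (lamEq G s d)) m n a : ℝ))) = s n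
  apply pick_eq
  intro a
  refine Finset.sum_le_sum fun m _ => ?_
  rw [assigned_eq]
  unfold myT
  by_cases ha : a = s n
  · rw [if_pos ha, if_pos rfl]
  · rw [if_neg ha, if_pos rfl]
    positivity

lemma assigned_at (G : Fin 2 → (∀ _ : Fin 2, Fin 2) → ℝ) (s : ∀ _ : Fin 2, Fin 2)
    (d : Fin 2 → Fin 2 → NNReal) (m n : Fin 2) :
    assigned (lamEq G s d) (xEq (lamEq G s d)) m n (s n) = d m n := by
  rw [assigned_eq]
  unfold myT
  rw [if_pos rfl]

lemma V_eq (G : Fin 2 → (∀ _ : Fin 2, Fin 2) → ℝ) (s : ∀ _ : Fin 2, Fin 2)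
    (d : Fin 2 → Fin 2 → NNReal) (m : Fin 2) :
    V G (lamEq G s d) (xEq (lamEq G s d)) (sigEq s) m = G m s - ∑ n, (d m n : ℝ) := by
  unfold V
  rw [act_eq]
  congr 1
  exact Finset.sum_congr rfl fun n _ => by rw [assigned_at]

lemma prin_main (G : Fin 2 → (∀ _ : Fin 2, Fin 2) → ℝ) (s : ∀ _ : Fin 2, Fin 2)
    (d : Fin 2 → Fin 2 → NNReal)
    (hIR : ∀ m : Fin 2, Finset.univ.inf' Finset.univ_nonempty (G m) ≤ G m s - ∑ n, (d m n : ℝ)) :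
    PrinOpt G (lamEq G s d) (xEq (lamEq G s d)) (sigEq s) := by
  intro m dd
  rw [V_eq]
  by_cases hne : dd = lamEq G s d m
  · rw [hne, Function.update_eq_self, V_eq]
  · have hrep : rRep (lamEq G s d) (Function.update (lamEq G s d) m dd) = some m :=
      (truthful_main G s d).2 m dd hne 0 0
    have hxc : ∀ mm : Fin 2, (fun i : Fin 2 => xEq (lamEq G s d) i (Function.update (lamEq G s d) m dd) mm)
        = fun _ : Fin 2 => some m := fun mm => funext fun i => hrep
    have hassm : assigned (Function.update (lamEq G s d) m dd) (xEq (lamEq G s d)) m = dd.1 := by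
      show drmOut m (Function.update (lamEq G s d) m dd m) _ = dd.1
      rw [hxc m, drmOut_nodev m _ _ (fun i => Or.inr rfl), Function.update_self]
    have hassj : assigned (Function.update (lamEq G s d) m dd) (xEq (lamEq G s d)) (m + 1)
        = pun G s d (m + 1) m := by
      show drmOut (m + 1) (Function.update (lamEq G s d) m dd (m + 1)) _ = _
      rw [hxc (m + 1), drmOut_pun (m + 1) m (Ne.symm (fin2_succ_ne m)) _ _ (fun i => rfl),
        Function.update_of_ne (fin2_succ_ne m)]
      rfl
    have hopt : ∀ (n a : Fin 2),
        (∑ mm, ((assigned (Function.update (lamEq G s d) m dd) (xEq (lamEq G s d)) mm n a : ℝ)))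
          ≤ ∑ mm, ((assigned (Function.update (lamEq G s d) m dd) (xEq (lamEq G s d)) mm n
              (act (Function.update (lamEq G s d) m dd) (xEq (lamEq G s d)) (sigEq s) n) : ℝ)) := by
      intro n a
      have hpd : act (Function.update (lamEq G s d) m dd) (xEq (lamEq G s d)) (sigEq s) n
          = pick (s n) (fun a' => ∑ mm, ((assigned (Function.update (lamEq G s d) m dd)
              (xEq (lamEq G s d)) mm n a' : ℝ))) := rfl
      rw [hpd]
      exact pick_le (s n) (fun a' => ∑ mm, ((assigned (Function.update (lamEq G s d) m dd)
        (xEq (lamEq G s d)) mm n a' : ℝ))) a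
    unfold V
    set aA := act (Function.update (lamEq G s d) m dd) (xEq (lamEq G s d)) (sigEq s) with haA
    rw [hassm]
    have hkey : G m aA - ∑ n, ((dd.1 n (aA n) : ℝ))
        ≤ Finset.univ.inf' Finset.univ_nonempty (G m) := by
      by_cases hA : ∀ n, aA n = sbar G m n
      · have haa : aA = sbar G m := funext hA
        have hnn : (0:ℝ) ≤ ∑ n, ((dd.1 n (aA n) : ℝ)) :=
          Finset.sum_nonneg fun i _ => NNReal.coe_nonneg _
        have hGa : G m aA = Finset.univ.inf' Finset.univ_nonempty (G m) := by
          rw [haa]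
          exact (sbar_spec G m).symm
        linarith
      · push_neg at hA
        obtain ⟨n₀, hn₀⟩ := hA
        have hob := hopt n₀ (sbar G m n₀)
        rw [fin2_sum m, fin2_sum m] at hob
        rw [hassm, hassj] at hob
        have hps : pun G s d (m + 1) m n₀ (sbar G m n₀)
            = myT s d (m + 1) n₀ (sbar G m n₀) + Cval G d (m + 1) m := by
          unfold pun
          rw [if_pos rfl]
        have hpa : pun G s d (m + 1) m n₀ (aA n₀) = myT s d (m + 1) n₀ (aA n₀) := by
          unfold pun
          rw [if_neg hn₀, add_zero]
        rw [hps, hpa] at hob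
        push_cast at hob
        have hmyle : (myT s d (m + 1) n₀ (aA n₀) : ℝ) ≤ (d (m + 1) 0 : ℝ) + (d (m + 1) 1 : ℝ) := by
          unfold myT
          split
          · rcases fin2_or n₀ 0 with h | h <;> subst h
            · have := NNReal.coe_nonneg (d (m + 1) 1)
              push_cast
              linarith
            · rw [fin2_zao]
              have := NNReal.coe_nonneg (d (m + 1) 0)
              push_cast
              linarith
          · have h0 := NNReal.coe_nonneg (d (m + 1) 0)
            have h1 := NNReal.coe_nonneg (d (m + 1) 1)
            push_cast
            linarith
        have hC : (Finset.univ.sup' Finset.univ_nonempty (G m)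
              - Finset.univ.inf' Finset.univ_nonempty (G m))
              + ((d (m + 1) 0 : ℝ) + (d (m + 1) 1 : ℝ)) ≤ (Cval G d (m + 1) m : ℝ) := by
          unfold Cval
          push_cast
          rw [Real.coe_toNNReal']
          have := le_max_left (Finset.univ.sup' Finset.univ_nonempty (G m)
            - Finset.univ.inf' Finset.univ_nonempty (G m)) (0:ℝ)
          linarith
        have hmynn : (0:ℝ) ≤ (myT s d (m + 1) n₀ (sbar G m n₀) : ℝ) := NNReal.coe_nonneg _
        have hddnn : (0:ℝ) ≤ (dd.1 n₀ (sbar G m n₀) : ℝ) := NNReal.coe_nonneg _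
        have hdd : Finset.univ.sup' Finset.univ_nonempty (G m)
            - Finset.univ.inf' Finset.univ_nonempty (G m) ≤ (dd.1 n₀ (aA n₀) : ℝ) := by
          linarith
        have hGle : G m aA ≤ Finset.univ.sup' Finset.univ_nonempty (G m) :=
          Finset.le_sup' (G m) (Finset.mem_univ aA)
        have hsum : (dd.1 n₀ (aA n₀) : ℝ) ≤ ∑ n, ((dd.1 n (aA n) : ℝ)) :=
          Finset.single_le_sum (f := fun i => ((dd.1 i (aA i) : ℝ))) (fun i _ => NNReal.coe_nonneg _) (Finset.mem_univ n₀)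
        linarith
    linarith [hIR m]

end Prop2Aux

/-- **Proposition 2.** In the 2-principal, 2-agent, 2-action game in which agents have
no direct preferences (`F ≡ 0`) and gross payoffs are nonnegative, an allocation
`(s, d)` is a truthful Λ-equilibrium allocation if and only if it satisfies AM and, for
each principal `m`, `G^m(s) − Σ_n d_n^m ≥ G̲^m`, where `G̲^m` is `m`'s minimum gross
payoff. Principals are `Fin 2`; agent `0` (A) has actions `0 = U`, `1 = D` and agent `1`
(B) has actions `0 = L`, `1 = R`. -/
theorem proposition2
    (G : Fin 2 → (∀ _ : Fin 2, Fin 2) → ℝ) (hG : ∀ m s, 0 ≤ G m s)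
    (s : ∀ _ : Fin 2, Fin 2) (d : Fin 2 → Fin 2 → NNReal) :
    (∃ (lam : Fin 2 → DRM (Fin 2) (Fin 2) fun _ => Fin 2)
        (x : CommStrat (Fin 2) (Fin 2) fun _ => Fin 2)
        (sig : ActStrat (Fin 2) (Fin 2) fun _ => Fin 2),
        LambdaEq G (fun _ _ => 0) lam x sig ∧ Truthful lam x ∧
        act lam x sig = s ∧ ∀ m n, assigned lam x m n (s n) = d m n) ↔
      (AM (S := fun _ : Fin 2 => Fin 2) (fun _ _ => 0) s d ∧
        ∀ m, Finset.univ.inf' Finset.univ_nonempty (G m) ≤ G m s - ∑ n, (d m n : ℝ)) := by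
  constructor
  · rintro ⟨lam, x, sig, ⟨hAct, hMsg, hPrin⟩, ⟨hT1, hT2⟩, hact, hass⟩
    constructor
    · refine ⟨assigned lam x, ?_, fun mm nn => (hass mm nn).symm⟩
      intro n s'
      have h := hAct n lam (x n lam) (assigned lam x) s'
      have h2 : sig n lam (x n lam) (assigned lam x) = s n := congrFun hact n
      rw [h2] at h
      exact h
    · intro m
      obtain ⟨d', hd'ne, hd'1⟩ : ∃ d' : DRM (Fin 2) (Fin 2) (fun _ : Fin 2 => Fin 2),
          d' ≠ lam m ∧ d'.1 = fun _ _ => (0:NNReal) := by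
        by_cases h : lam m = ((fun _ _ => 0), fun _ => fun _ _ => (0:NNReal))
        · refine ⟨((fun _ _ => 0), fun _ => fun _ _ => (1:NNReal)), ?_, rfl⟩
          rw [h]
          intro hh
          have h2 : (1:NNReal) = 0 :=
            congrFun (congrFun (congrFun (congrArg Prod.snd hh) 0) 0) 0
          exact one_ne_zero h2
        · exact ⟨((fun _ _ => 0), fun _ => fun _ _ => (0:NNReal)), fun hh => h hh.symm, rfl⟩
      have hp := hPrin m d'
      have hV : V G lam x sig m = G m s - ∑ n, (d m n : ℝ) := by
        unfold V
        rw [hact]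
        congr 1
        exact Finset.sum_congr rfl fun n _ => by rw [hass]
      have hdev : Finset.univ.inf' Finset.univ_nonempty (G m)
          ≤ V G (Function.update lam m d') x sig m := by
        unfold V
        have hassm : assigned (Function.update lam m d') x m = d'.1 := by
          show drmOut m (Function.update lam m d' m)
            (fun i => x i (Function.update lam m d') m) = d'.1
          have hxc : (fun i : Fin 2 => x i (Function.update lam m d') m)
              = fun _ : Fin 2 => some m := funext fun i => hT2 m d' hd'ne i m
          rw [hxc, drmOut_nodev m _ _ (fun i => Or.inr rfl), Function.update_self]
        rw [hassm, hd'1]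
        have hz : (∑ n : Fin 2, (((fun _ _ => (0:NNReal)) n
            (act (Function.update lam m d') x sig n) : NNReal) : ℝ)) = 0 := by
          simp
        rw [hz, sub_zero]
        exact Finset.inf'_le _ (Finset.mem_univ _)
      rw [hV] at hp
      linarith
  · rintro ⟨hAM, hIR⟩
    exact ⟨lamEq G s d, xEq (lamEq G s d), sigEq s,
      ⟨actopt_main s, msg_main G s d, prin_main G s d hIR⟩,
      truthful_main G s d, act_eq G s d, fun m n => assigned_at G s d m n⟩

end CMGPTA

end
end

section
/- (Minmax value in the 2×2×2 game) In the game with two principals, two agents with two actions each, F_n ≡ 0 for both agents, and nonnegative gross payoffs, each principal m's minmax value equals his minimum gross payoff: V̲^m = G̲^m = min_{s∈S} G^m(s). -/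
open scoped Classical
open Finset

noncomputable section

namespace CMGPTA

variable {M N : Type*} [Fintype M] [Fintype N] [DecidableEq M] [DecidableEq N]
variable {S : N → Type*} [∀ n, Fintype (S n)] [∀ n, Nonempty (S n)]

/-- **Minmax value in the 2×2×2 game.** With two principals, two agents with two actions
each, no direct agent preferences (`F ≡ 0`), and nonnegative gross payoffs, each
principal's minmax value equals his minimum gross payoff: `V̲^m = G̲^m = min_{s∈S} G^m(s)`. -/
theorem minmax_eq_min_gross_2x2x2
    (G : Fin 2 → (∀ _ : Fin 2, Fin 2) → ℝ) (hG : ∀ m s, 0 ≤ G m s) (m : Fin 2) :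
    minmax (S := fun _ : Fin 2 => Fin 2) G (fun _ _ => 0) m =
      Finset.univ.inf' Finset.univ_nonempty (G m) := by
  classical
  set F : ∀ _ : Fin 2, Fin 2 → ℝ := (fun _ _ => 0) with hFdef
  set Gmin := Finset.univ.inf' Finset.univ_nonempty (G m) with hGmin
  set Gmax := Finset.univ.sup' Finset.univ_nonempty (G m) with hGmax
  have hminle : ∀ s, Gmin ≤ G m s := fun s => Finset.inf'_le _ (Finset.mem_univ s)
  have hlemax : ∀ s, G m s ≤ Gmax := fun s => Finset.le_sup' _ (Finset.mem_univ s)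
  have hminmax : Gmin ≤ Gmax := (hminle (fun _ => 0)).trans (hlemax _)
  -- `Shat` is nonempty for every schedule profile
  have hShat : ∀ t : Fin 2 → Sched (Fin 2) (fun _ : Fin 2 => Fin 2),
      (Shat F t).Nonempty := by
    intro t
    have hs : ∀ n : Fin 2, ∃ b : Fin 2, ∀ a : Fin 2,
        ∑ j, (t j n a : ℝ) ≤ ∑ j, (t j n b : ℝ) := by
      intro n
      obtain ⟨b, -, hb⟩ := Finset.exists_max_image Finset.univ
        (fun a => ∑ j, (t j n a : ℝ)) Finset.univ_nonempty
      exact ⟨b, fun a => hb a (Finset.mem_univ a)⟩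
    choose s hsmax using hs
    refine ⟨s, fun n s' => ?_⟩
    simpa [hFdef] using hsmax n s'
  have hfin : ∀ t : Fin 2 → Sched (Fin 2) (fun _ : Fin 2 => Fin 2),
      ((fun s => G m s - ∑ n, ((t m n (s n) : ℝ))) '' Shat F t).Finite :=
    fun t => Set.Finite.image _ (Set.toFinite _)
  -- Step A : every inner sup is at least Gmin
  have stepA : ∀ t : Fin 2 → Sched (Fin 2) (fun _ : Fin 2 => Fin 2),
      Gmin ≤ innerSup G F m t := by
    intro t
    have hub : ∀ v ∈ {v | ∃ tm : Sched (Fin 2) (fun _ : Fin 2 => Fin 2),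
        v = worst G F m (Function.update t m tm)}, v ≤ Gmax := by
      rintro v ⟨tm, rfl⟩
      obtain ⟨s, hsmem⟩ := hShat (Function.update t m tm)
      have h1 : worst G F m (Function.update t m tm) ≤
          G m s - ∑ n, ((Function.update t m tm) m n (s n) : ℝ) :=
        csInf_le (Set.Finite.bddBelow (hfin _)) ⟨s, hsmem, rfl⟩
      have h2 : (0:ℝ) ≤ ∑ n, ((Function.update t m tm) m n (s n) : ℝ) :=
        Finset.sum_nonneg fun n _ => NNReal.coe_nonneg _
      have := hlemax s
      linarith
    have hv0 : Gmin ≤ worst G F m (Function.update t m (fun _ _ => 0)) := by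
      apply le_csInf ((hShat _).image _)
      rintro x ⟨s, -, rfl⟩
      have : ((Function.update t m (fun _ _ => 0 : Sched (Fin 2)
          (fun _ : Fin 2 => Fin 2))) m : Sched (Fin 2) (fun _ : Fin 2 => Fin 2))
          = fun _ _ => 0 := Function.update_self ..
      rw [this]
      simpa using hminle s
    exact hv0.trans (le_csSup ⟨Gmax, fun v hv => hub v hv⟩ ⟨_, rfl⟩)
  -- Step B : a schedule profile whose inner sup is at most Gmin
  obtain ⟨sstar, -, hsstar⟩ := Finset.exists_mem_eq_inf'
    (Finset.univ_nonempty (α := ∀ _ : Fin 2, Fin 2)) (G m)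
  set m' : Fin 2 := if m = 0 then 1 else 0 with hm'
  have hm'ne : m' ≠ m := by fin_cases m <;> simp [hm']
  set K : NNReal := Real.toNNReal (Gmax - Gmin) with hKdef
  have hK : (K : ℝ) = Gmax - Gmin := Real.coe_toNNReal _ (by linarith)
  set t0 : Fin 2 → Sched (Fin 2) (fun _ : Fin 2 => Fin 2) :=
    fun j n sn => if j = m' ∧ sn = sstar n then K else 0 with ht0
  have huniv : (Finset.univ : Finset (Fin 2)) = {m, m'} := by
    fin_cases m <;> simp [hm'] <;> decide
  have hsum : ∀ (u : Fin 2 → Sched (Fin 2) (fun _ : Fin 2 => Fin 2)) (n x : Fin 2),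
      ∑ j, ((u j) n x : ℝ) = (u m n x : ℝ) + (u m' n x : ℝ) := by
    intro u n x
    rw [huniv, Finset.sum_pair (Ne.symm hm'ne)]
  have stepB1 : ∀ tm : Sched (Fin 2) (fun _ : Fin 2 => Fin 2),
      worst G F m (Function.update t0 m tm) ≤ Gmin := by
    intro tm
    obtain ⟨s, hsmem⟩ := hShat (Function.update t0 m tm)
    have hupm : (Function.update t0 m tm) m = tm := Function.update_self ..
    have hupm' : (Function.update t0 m tm) m' = t0 m' := Function.update_of_ne hm'ne _ _
    have hle : G m s - ∑ n, ((Function.update t0 m tm) m n (s n) : ℝ) ≤ Gmin := by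
      rw [hupm]
      by_cases hss : s = sstar
      · have h0 : (0:ℝ) ≤ ∑ n, (tm n (s n) : ℝ) :=
          Finset.sum_nonneg fun n _ => NNReal.coe_nonneg _
        have : G m s = Gmin := by rw [hss, hGmin, hsstar]
        linarith
      · obtain ⟨n, hn⟩ : ∃ n, s n ≠ sstar n := by
          by_contra h; push_neg at h; exact hss (funext h)
        have hopt := hsmem n (sstar n)
        simp only [hFdef, zero_add] at hopt
        rw [hsum, hsum, hupm, hupm'] at hopt
        have e1 : (t0 m' n (sstar n) : ℝ) = K := by simp [ht0]
        have e2 : (t0 m' n (s n) : ℝ) = 0 := by simp [ht0, hn]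
        rw [e1, e2] at hopt
        have h3 : (0:ℝ) ≤ (tm n (sstar n) : ℝ) := NNReal.coe_nonneg _
        have h4 : (K : ℝ) ≤ (tm n (s n) : ℝ) := by linarith
        have h5 : (tm n (s n) : ℝ) ≤ ∑ i, (tm i (s i) : ℝ) :=
          Finset.single_le_sum (f := fun i => (tm i (s i) : ℝ))
            (fun i _ => NNReal.coe_nonneg _) (Finset.mem_univ n)
        have := hlemax s
        linarith
    exact (csInf_le (Set.Finite.bddBelow (hfin _)) ⟨s, hsmem, rfl⟩).trans hle
  have stepB2 : innerSup G F m t0 ≤ Gmin := by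
    refine csSup_le ?_ ?_
    · exact ⟨worst G F m (Function.update t0 m fun _ _ => 0), ⟨(fun _ _ => 0), rfl⟩⟩
    · rintro v ⟨tm, rfl⟩
      exact stepB1 tm
  -- combine
  have hbdd : BddBelow {v | ∃ t : Fin 2 → Sched (Fin 2) (fun _ : Fin 2 => Fin 2),
      v = innerSup G F m t} := ⟨Gmin, by rintro v ⟨t, rfl⟩; exact stepA t⟩
  refine le_antisymm ?_ ?_
  · exact (csInf_le hbdd ⟨t0, rfl⟩).trans stepB2
  · exact le_csInf ⟨_, t0, rfl⟩ (by rintro v ⟨t, rfl⟩; exact stepA t)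

end CMGPTA

end
end

section
/- (Punishment bound in the 2×2×2 game) Consider two principals and two agents A, B with actions {U,D} and {L,R}, F ≡ 0, and principal 2's gross payoffs y₁, y₂, y₃, y₄ ≥ 0 at (U,L), (U,R), (D,L), (D,R) respectively, with y₁ = min{y₁,y₂,y₃,y₄}. Suppose principal 1's transfer schedules t^{1,2} satisfy t^{1,2}_A(U) ≥ y₃, t^{1,2}_B(L) ≥ y₂, t^{1,2}_A(U) + t^{1,2}_B(L) ≥ y₄, and t^{1,2}_A(D) = t^{1,2}_B(R) = 0. Then for every profile t² of principal 2's transfer schedules, min_{s ∈ Ŝ(t^{1,2}, t²)} [G²(s) − t²_A(s_A) − t²_B(s_B)] ≤ y₁: against the punishment schedules t^{1,2}, principal 2 can obtain at most his minimum gross payoff when agents break ties against him. -/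
open scoped Classical
open Finset

noncomputable section

namespace CMGPTA

variable {M N : Type*} [Fintype M] [Fintype N] [DecidableEq M] [DecidableEq N]
variable {S : N → Type*} [∀ n, Fintype (S n)] [∀ n, Nonempty (S n)]

/-- **Punishment bound in the 2×2×2 game.** Agent `0` (A) has actions `0 = U`, `1 = D`;
agent `1` (B) has actions `0 = L`, `1 = R`, so `![0,0] = (U,L)`, `![0,1] = (U,R)`,
`![1,0] = (D,L)`, `![1,1] = (D,R)`. Principal 2's gross payoffs `G²` are nonnegative
with minimum `y₁ = G² (U,L)`. If principal 1's punishment schedules `t^{1,2}` satisfy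
`t^{1,2}_A(U) ≥ y₃`, `t^{1,2}_B(L) ≥ y₂`, `t^{1,2}_A(U) + t^{1,2}_B(L) ≥ y₄` and
`t^{1,2}_A(D) = t^{1,2}_B(R) = 0`, then against `t^{1,2}` every profile `t²` of
principal 2's transfer schedules yields him at most `y₁` when the agents break ties
against him. -/
theorem punishment_bound_2x2x2
    (G2 : (∀ _ : Fin 2, Fin 2) → ℝ) (hpos : ∀ s, 0 ≤ G2 s)
    (hmin : ∀ s, G2 ![0, 0] ≤ G2 s)
    (t12 : Sched (Fin 2) fun _ => Fin 2)
    (hAU : G2 ![1, 0] ≤ (t12 0 0 : ℝ))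
    (hBL : G2 ![0, 1] ≤ (t12 1 0 : ℝ))
    (hsum : G2 ![1, 1] ≤ (t12 0 0 : ℝ) + (t12 1 0 : ℝ))
    (hAD : t12 0 1 = 0) (hBR : t12 1 1 = 0) :
    ∀ t2 : Sched (Fin 2) fun _ => Fin 2,
      worst (M := Fin 2) (fun _ => G2) (fun _ _ => 0) 1
          (fun j => if j = 0 then t12 else t2) ≤ G2 ![0, 0] := by
  intro t2
  have hAD' : (t12 0 1 : ℝ) = 0 := by exact_mod_cast congrArg NNReal.toReal hAD
  have hBR' : (t12 1 1 : ℝ) = 0 := by exact_mod_cast congrArg NNReal.toReal hBR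
  have h0 : (0 : ℝ) ≤ G2 ![0, 0] := hpos _
  set T : Fin 2 → Sched (Fin 2) fun _ => Fin 2 := fun j => if j = 0 then t12 else t2
    with hT
  have hbdd :
      BddBelow ((fun s => (fun _ : Fin 2 => G2) 1 s - ∑ n, (T 1 n (s n) : ℝ)) ''
        Shat (fun _ _ => 0) T) :=
    ((Set.toFinite _).image _).bddBelow
  have step : ∀ s : ∀ _ : Fin 2, Fin 2, s ∈ Shat (fun _ _ => 0) T →
      G2 s - ((t2 0 (s 0) : ℝ) + (t2 1 (s 1) : ℝ)) ≤ G2 ![0, 0] →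
      worst (M := Fin 2) (fun _ => G2) (fun _ _ => 0) 1 T ≤ G2 ![0, 0] := by
    intro s hs hle
    refine le_trans (csInf_le hbdd ⟨s, hs, rfl⟩) ?_
    simpa [hT, Fin.sum_univ_two] using hle
  have c00 := (t2 0 0).coe_nonneg
  have c01 := (t2 0 1).coe_nonneg
  have c10 := (t2 1 0).coe_nonneg
  have c11 := (t2 1 1).coe_nonneg
  by_cases hA : (t2 0 1 : ℝ) ≤ (t12 0 0 : ℝ) + t2 0 0
  · by_cases hB : (t2 1 1 : ℝ) ≤ (t12 1 0 : ℝ) + t2 1 0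
    · refine step ![0, 0] ?_ ?_
      · intro n s'
        fin_cases n <;> fin_cases s' <;>
          simp [Shat, hT, Fin.sum_univ_two, hAD', hBR'] <;> linarith
      · simp only [Matrix.cons_val_zero, Matrix.cons_val_one, Matrix.head_cons]
        linarith
    · push_neg at hB
      refine step ![0, 1] ?_ ?_
      · intro n s'
        fin_cases n <;> fin_cases s' <;>
          simp [Shat, hT, Fin.sum_univ_two, hAD', hBR'] <;> linarith
      · simp only [Matrix.cons_val_zero, Matrix.cons_val_one, Matrix.head_cons]
        linarith
  · push_neg at hA
    by_cases hB : (t2 1 1 : ℝ) ≤ (t12 1 0 : ℝ) + t2 1 0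
    · refine step ![1, 0] ?_ ?_
      · intro n s'
        fin_cases n <;> fin_cases s' <;>
          simp [Shat, hT, Fin.sum_univ_two, hAD', hBR'] <;> linarith
      · simp only [Matrix.cons_val_zero, Matrix.cons_val_one, Matrix.head_cons]
        linarith
    · push_neg at hB
      refine step ![1, 1] ?_ ?_
      · intro n s'
        fin_cases n <;> fin_cases s' <;>
          simp [Shat, hT, Fin.sum_univ_two, hAD', hBR'] <;> linarith
      · simp only [Matrix.cons_val_zero, Matrix.cons_val_one, Matrix.head_cons]
        linarith

end CMGPTA

end
end

section
/- (Corollary: GPTA equilibria are PIR-AM) Every pure-strategy equilibrium allocation of a GPTA lies in Z*: if (t̂, σ̂) is a pure-strategy equilibrium of the GPTA with allocation (ŝ, d̂) = (σ̂(t̂), (t̂_n^m(σ̂_n(t̂)))_{m,n}), then ŝ ∈ Ŝ(t̂) with d̂_n^m = t̂_n^m(ŝ_n) (AM holds), and for every principal m, G^m(ŝ) − Σ_{n∈N} d̂_n^m ≥ V̲^m (PIR holds). Hence Z^G ⊆ Z*. -/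
open scoped Classical
open Finset

noncomputable section

namespace CMGPTA

variable {M N : Type*} [Fintype M] [Fintype N] [DecidableEq M] [DecidableEq N]
variable {S : N → Type*} [∀ n, Fintype (S n)] [∀ n, Nonempty (S n)]

/-- A pure-strategy equilibrium of the GPTA: agents choose optimal actions given any
transfer schedules, and no principal gains by unilaterally changing his schedules. -/
def GPTAeq (G : M → (∀ n, S n) → ℝ) (F : ∀ n : N, S n → ℝ) (t : M → Sched N S)
    (sig : ∀ n : N, (M → Sched N S) → S n) : Prop :=
  (∀ (n : N) (t' : M → Sched N S) (s' : S n),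
      F n s' + ∑ m, (t' m n s' : ℝ) ≤
        F n (sig n t') + ∑ m, (t' m n (sig n t') : ℝ)) ∧
  ∀ (m : M) (tm : Sched N S),
      G m (fun n => sig n (Function.update t m tm)) -
          ∑ n, (tm n (sig n (Function.update t m tm)) : ℝ) ≤
        G m (fun n => sig n t) - ∑ n, (t m n (sig n t) : ℝ)

/-- **Corollary: GPTA equilibrium allocations are PIR-AM.** If `(t̂, σ̂)` is a
pure-strategy equilibrium of the GPTA, then its allocation
`(ŝ, d̂) = (σ̂(t̂), (t̂_n^m(σ̂_n(t̂))))` satisfies AM (with witness `t̂`) and PIR;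
hence `Z^G ⊆ Z*`. -/
theorem gpta_equilibrium_in_Zstar
    (G : M → (∀ n, S n) → ℝ) (F : ∀ n : N, S n → ℝ)
    (hM : 2 ≤ Fintype.card M) (hN : 2 ≤ Fintype.card N)
    (t : M → Sched N S) (sig : ∀ n : N, (M → Sched N S) → S n)
    (heq : GPTAeq G F t sig) :
    (fun n => sig n t) ∈ Shat F t ∧
    AM F (fun n => sig n t) (fun m n => t m n (sig n t)) ∧
    PIR G F (fun n => sig n t) (fun m n => t m n (sig n t)) := by

  obtain ⟨hact, hprin⟩ := heq
  have hshat : ∀ t' : M → Sched N S, (fun n => sig n t') ∈ Shat F t' := by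
    intro t' n s'; exact hact n t' s'
  refine ⟨hshat t, ⟨t, hshat t, fun m n => rfl⟩, ?_⟩
  intro m
  obtain ⟨sMax, hMax⟩ := Finite.exists_max (G m)
  obtain ⟨sMin, hMin⟩ := Finite.exists_min (G m)
  have hSne : ∀ t' : M → Sched N S, (Shat F t').Nonempty := fun t' => ⟨_, hshat t'⟩
  have hfin : ∀ t' : M → Sched N S,
      ((fun s => G m s - ∑ n, (t' m n (s n) : ℝ)) '' Shat F t').Finite :=
    fun t' => (Set.toFinite (Shat F t')).image _
  -- every element of the worst-image is ≤ G m sMax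
  have hworst_le : ∀ t' : M → Sched N S,
      worst G F m t' ≤ G m (fun n => sig n t') - ∑ n, (t' m n (sig n t') : ℝ) := by
    intro t'
    exact csInf_le (hfin t').bddBelow ⟨_, hshat t', rfl⟩
  have hsum_nonneg : ∀ (t' : M → Sched N S) (s : ∀ n, S n),
      (0 : ℝ) ≤ ∑ n, (t' m n (s n) : ℝ) :=
    fun t' s => Finset.sum_nonneg fun n _ => (t' m n (s n)).coe_nonneg
  have hworst_max : ∀ t' : M → Sched N S, worst G F m t' ≤ G m sMax := by
    intro t'
    calc worst G F m t' ≤ _ := hworst_le t'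
      _ ≤ G m (fun n => sig n t') := by linarith [hsum_nonneg t' (fun n => sig n t')]
      _ ≤ G m sMax := hMax _
  -- the zero schedule gives worst ≥ G m sMin
  set z : Sched N S := fun _ _ => 0 with hz
  have hworst_min : ∀ t' : M → Sched N S,
      G m sMin ≤ worst G F m (Function.update t' m z) := by
    intro t'
    refine le_csInf ((hSne _).image _) ?_
    rintro b ⟨s, _, rfl⟩
    have : ∑ n, ((Function.update t' m z) m n (s n) : ℝ) = 0 := by
      rw [Function.update_self]; simp [hz]
    dsimp only
    rw [this]
    simpa using hMin s
  -- innerSup bounds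
  have hAbdd : ∀ t' : M → Sched N S,
      BddAbove {v | ∃ tm : Sched N S, v = worst G F m (Function.update t' m tm)} := by
    intro t'
    refine ⟨G m sMax, ?_⟩
    rintro v ⟨tm, rfl⟩
    exact hworst_max _
  have hinner_min : ∀ t' : M → Sched N S, G m sMin ≤ innerSup G F m t' := by
    intro t'
    exact le_trans (hworst_min t') (le_csSup (hAbdd t') ⟨z, rfl⟩)
  -- minmax ≤ innerSup at t
  have h1 : minmax G F m ≤ innerSup G F m t := by
    refine csInf_le ⟨G m sMin, ?_⟩ ⟨t, rfl⟩
    rintro v ⟨t', rfl⟩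
    exact hinner_min t'
  -- innerSup at t ≤ equilibrium payoff
  have h2 : innerSup G F m t ≤ G m (fun n => sig n t) - ∑ n, (t m n (sig n t) : ℝ) := by
    refine csSup_le ⟨_, z, rfl⟩ ?_
    rintro v ⟨tm, rfl⟩
    have hle := hworst_le (Function.update t m tm)
    have hupd : ∀ s : ∀ n, S n,
        ∑ n, ((Function.update t m tm) m n (s n) : ℝ) = ∑ n, (tm n (s n) : ℝ) := by
      intro s; simp [Function.update_self]
    rw [hupd] at hle
    exact le_trans hle (hprin m tm)
  exact le_trans h1 h2


end CMGPTA

end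
end
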